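/- Let X ~ Γ_λ(α,β) with λ ∈ (0,1), α > 0, β > 0 and α + 2 < 1/λ. Then E[X²] = α(α+1) / (β² (1-λ(α+1))(1-λ(α+2))). -/

import Mathlib

open MeasureTheory

/-- The degenerate gamma function `Γ_λ(s) = ∫_0^∞ (1+λt)^{-1/λ} t^{s-1} dt`. -/
noncomputable def degGamma (lam s : ℝ) : ℝ :=
  ∫ t in Set.Ioi (0:ℝ), (1 + lam * t) ^ (-1/lam) * t ^ (s - 1)

/-- The probability density function of the degenerate gamma distribution `Γ_λ(α,β)`. -/
noncomputable def degGammaPdf (lam α β x : ℝ) : ℝ :=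
  if 0 < x then (1 / degGamma lam α) * β * (1 + lam * β * x) ^ (-1/lam) * (β * x) ^ (α - 1)
  else 0

/-!
The substitution `t = βx` turns the second moment into `Γ_λ(α+2) / (β² Γ_λ(α))`. Integrating
the derivative of `t^s (1+λt)^{1-1/λ}`, which vanishes at `0` and at `∞` when `s + 1 < 1/λ`,
gives the recurrence `(1 - λ(s+1)) Γ_λ(s+1) = s Γ_λ(s)`; applying it twice finishes the proof.
-/

open Set Filter Real Topology

noncomputable def degGammaIntegrand (lam s t : ℝ) : ℝ :=
  (1 + lam * t) ^ (-1/lam) * t ^ (s - 1)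

noncomputable def degGammaPrimitive (lam s t : ℝ) : ℝ :=
  t ^ s * (1 + lam * t) ^ (1 - 1/lam)

namespace degGammaIntegrand

variable {lam s t : ℝ}

lemma integral_Ioi_eq_degGamma (lam s : ℝ) :
    ∫ t in Ioi 0, degGammaIntegrand lam s t = degGamma lam s := rfl

lemma pos (hl : 0 ≤ lam) (ht : 0 < t) : 0 < degGammaIntegrand lam s t := by
  unfold degGammaIntegrand; positivity

lemma continuousOn (hl : 0 ≤ lam) : ContinuousOn (degGammaIntegrand lam s) (Ioi 0) := by
  intro t (ht : 0 < t)
  have h1 : 0 < 1 + lam * t := by positivity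
  unfold degGammaIntegrand
  exact ((continuousAt_const.add (continuousAt_const.mul continuousAt_id)).rpow_const
    (Or.inl h1.ne')).mul (continuousAt_id.rpow_const (Or.inl ht.ne')) |>.continuousWithinAt

lemma le_rpow (hl : 0 ≤ lam) (ht : 0 < t) : degGammaIntegrand lam s t ≤ t ^ (s - 1) := by
  refine mul_le_of_le_one_left (rpow_nonneg ht.le _) (rpow_le_one_of_one_le_of_nonpos ?_ ?_)
  · nlinarith
  · exact div_nonpos_of_nonpos_of_nonneg (by norm_num) hl

lemma le_mul_rpow (hl : 0 < lam) (ht : 0 < t) :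
    degGammaIntegrand lam s t ≤ lam ^ (-1/lam) * t ^ (s - 1 - 1/lam) := by
  have hbase : (1 + lam * t) ^ (-1/lam) ≤ (lam * t) ^ (-1/lam) :=
    rpow_le_rpow_of_nonpos (by positivity) (by linarith)
      (div_nonpos_of_nonpos_of_nonneg (by norm_num) hl.le)
  calc degGammaIntegrand lam s t ≤ (lam * t) ^ (-1/lam) * t ^ (s - 1) :=
        mul_le_mul_of_nonneg_right hbase (rpow_nonneg ht.le _)
    _ = lam ^ (-1/lam) * t ^ (s - 1 - 1/lam) := by
        rw [mul_rpow hl.le ht.le, mul_assoc, ← rpow_add ht]; ring_nf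

/-- `t^{s-1}` controls the integrand near `0`, and `t^{s-1-1/λ}` near `∞`. -/
lemma integrableOn_Ioi (hl : 0 < lam) (hs : 0 < s) (hsl : s < 1/lam) :
    IntegrableOn (degGammaIntegrand lam s) (Ioi 0) := by
  have hmeas : ∀ u ⊆ Ioi (0:ℝ), MeasurableSet u →
      AEStronglyMeasurable (degGammaIntegrand lam s) (volume.restrict u) := fun u hu hum =>
    ((continuousOn hl.le).mono hu).aestronglyMeasurable hum
  rw [← Ioc_union_Ioi_eq_Ioi zero_le_one]
  refine IntegrableOn.union ?_ ?_
  · refine Integrable.mono' ((intervalIntegrable_iff_integrableOn_Ioc_of_le zero_le_one).mp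
      (intervalIntegral.intervalIntegrable_rpow' (r := s - 1) (by linarith)))
      (hmeas _ Ioc_subset_Ioi_self measurableSet_Ioc) ?_
    filter_upwards [ae_restrict_mem measurableSet_Ioc] with t ht
    rw [norm_of_nonneg (pos hl.le ht.1).le]
    exact le_rpow hl.le ht.1
  · have hdecay : s - 1 - 1/lam < -1 := by linarith
    refine Integrable.mono'
      ((integrableOn_Ioi_rpow_of_lt hdecay one_pos).const_mul (lam ^ (-1/lam)))
      (hmeas _ (Ioi_subset_Ioi zero_le_one) measurableSet_Ioi) ?_
    filter_upwards [ae_restrict_mem measurableSet_Ioi] with t (ht : 1 < t)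
    rw [norm_of_nonneg (pos hl.le (one_pos.trans ht)).le]
    exact le_mul_rpow hl (one_pos.trans ht)

end degGammaIntegrand

lemma degGamma_pos {lam s : ℝ} (hl : 0 < lam) (hs : 0 < s) (hsl : s < 1/lam) :
    0 < degGamma lam s := by
  have hsupp : Function.support (degGammaIntegrand lam s) ∩ Ioi 0 = Ioi 0 :=
    inter_eq_right.mpr fun t (ht : 0 < t) => (degGammaIntegrand.pos hl.le ht).ne'
  rw [← degGammaIntegrand.integral_Ioi_eq_degGamma, setIntegral_pos_iff_support_of_nonneg_ae
    ?_ (degGammaIntegrand.integrableOn_Ioi hl hs hsl), hsupp, volume_Ioi]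
  · exact ENNReal.zero_lt_top
  · filter_upwards [ae_restrict_mem measurableSet_Ioi] with t (ht : 0 < t)
    exact (degGammaIntegrand.pos hl.le ht).le

namespace degGammaPrimitive

variable {lam s t : ℝ}

lemma hasDerivAt (hl : 0 < lam) (ht : 0 < t) :
    HasDerivAt (degGammaPrimitive lam s)
      (s * degGammaIntegrand lam s t + (lam * (s + 1) - 1) * degGammaIntegrand lam (s + 1) t) t := by
  have h1 : 0 < 1 + lam * t := by positivity
  have hbase : HasDerivAt (fun t : ℝ => 1 + lam * t) lam t := by
    simpa using ((hasDerivAt_id t).const_mul lam).const_add 1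
  refine ((hasDerivAt_rpow_const (p := s) (Or.inl ht.ne')).mul
    (hbase.rpow_const (p := 1 - 1/lam) (Or.inl h1.ne'))).congr_deriv ?_
  have hpow : (1 + lam * t) ^ (1 - 1/lam - 1) = (1 + lam * t) ^ (-1/lam) := by ring_nf
  have hsucc : t ^ s = t ^ (s - 1) * t := by
    rw [← rpow_add_one ht.ne']; ring_nf
  have hsplit : (1 + lam * t) ^ (1 - 1/lam) = (1 + lam * t) * (1 + lam * t) ^ (-1/lam) := by
    rw [show 1 - 1/lam = 1 + (-1/lam) by ring, rpow_add h1, rpow_one]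
  simp only [degGammaIntegrand, hpow, hsplit, add_sub_cancel_right, hsucc]
  field_simp
  ring

lemma continuousWithinAt_zero (hs : 0 < s) :
    ContinuousWithinAt (degGammaPrimitive lam s) (Ici 0) 0 :=
  ((continuousAt_rpow_const 0 s (Or.inr hs.le)).mul
    ((continuousAt_const.add (continuousAt_const.mul continuousAt_id)).rpow_const
      (Or.inl (by simp)))).continuousWithinAt

lemma apply_zero (hs : 0 < s) : degGammaPrimitive lam s 0 = 0 := by
  simp [degGammaPrimitive, zero_rpow hs.ne']

/-- `s + 1 < 1/λ` forces `1 - 1/λ < 0`, so the primitive is dominated by `λ^{1-1/λ} t^{s+1-1/λ}`. -/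
lemma tendsto_atTop (hl : 0 < lam) (hs : 0 < s) (hsl : s + 1 < 1/lam) :
    Tendsto (degGammaPrimitive lam s) atTop (𝓝 0) := by
  have hexp : 1 - 1/lam ≤ 0 := by
    have : 1 < 1/lam := by linarith
    linarith
  have hbound : Tendsto (fun t : ℝ => lam ^ (1 - 1/lam) * t ^ (s + 1 - 1/lam)) atTop (𝓝 0) := by
    have hdecay := (tendsto_rpow_neg_atTop (y := 1/lam - s - 1) (by linarith)).const_mul
      (lam ^ (1 - 1/lam))
    rw [mul_zero] at hdecay
    exact hdecay.congr fun t => by ring_nf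
  refine squeeze_zero' ?_ ?_ hbound <;> filter_upwards [eventually_gt_atTop 0] with t ht
  · unfold degGammaPrimitive; positivity
  · have hbase : (1 + lam * t) ^ (1 - 1/lam) ≤ (lam * t) ^ (1 - 1/lam) :=
      rpow_le_rpow_of_nonpos (by positivity) (by linarith) hexp
    calc degGammaPrimitive lam s t ≤ t ^ s * (lam * t) ^ (1 - 1/lam) :=
          mul_le_mul_of_nonneg_left hbase (rpow_nonneg ht.le _)
      _ = lam ^ (1 - 1/lam) * t ^ (s + 1 - 1/lam) := by
          rw [mul_rpow hl.le ht.le, add_sub_assoc, rpow_add ht]; ring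

end degGammaPrimitive

theorem degGamma_add_one {lam s : ℝ} (hl : 0 < lam) (hs : 0 < s) (hsl : s + 1 < 1/lam) :
    (1 - lam * (s + 1)) * degGamma lam (s + 1) = s * degGamma lam s := by
  have hint := degGammaIntegrand.integrableOn_Ioi hl hs (by linarith)
  have hint' := degGammaIntegrand.integrableOn_Ioi hl (by linarith : 0 < s + 1) hsl
  have hftc := integral_Ioi_of_hasDerivAt_of_tendsto (degGammaPrimitive.continuousWithinAt_zero hs)
    (fun t (ht : 0 < t) => degGammaPrimitive.hasDerivAt hl ht)
    ((hint.const_mul s).add (hint'.const_mul _)) (degGammaPrimitive.tendsto_atTop hl hs hsl)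
  rw [integral_add (hint.const_mul s) (hint'.const_mul _), integral_const_mul, integral_const_mul,
    degGammaIntegrand.integral_Ioi_eq_degGamma, degGammaIntegrand.integral_Ioi_eq_degGamma,
    degGammaPrimitive.apply_zero hs] at hftc
  linear_combination -hftc

theorem degGamma_add_two {lam s : ℝ} (hl : 0 < lam) (hs : 0 < s) (hsl : s + 2 < 1/lam) :
    (1 - lam * (s + 1)) * (1 - lam * (s + 2)) * degGamma lam (s + 2) =
      s * (s + 1) * degGamma lam s := by
  have hstep := degGamma_add_one hl (by linarith : 0 < s + 1) (by linarith : s + 1 + 1 < 1/lam)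
  rw [add_assoc, one_add_one_eq_two] at hstep
  linear_combination (1 - lam * (s + 1)) * hstep + (s + 1) * degGamma_add_one hl hs (by linarith)

theorem integral_pow_mul_degGammaPdf (lam α : ℝ) {β : ℝ} (hβ : 0 < β) (n : ℕ) :
    ∫ x, x ^ n * degGammaPdf lam α β x = degGamma lam (α + n) / (β ^ n * degGamma lam α) := by
  have hzero : ∀ x ∉ Ioi (0:ℝ), x ^ n * degGammaPdf lam α β x = 0 :=
    fun x (hx : ¬ 0 < x) => by rw [degGammaPdf, if_neg hx, mul_zero]
  have hpoint : ∀ x ∈ Ioi (0:ℝ), x ^ n * degGammaPdf lam α β x =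
      β / (β ^ n * degGamma lam α) * degGammaIntegrand lam (α + n) (β * x) := by
    intro x (hx : 0 < x)
    have hβx : 0 < β * x := by positivity
    have hpow : (β * x) ^ (α + n - 1) = (β * x) ^ (α - 1) * (β ^ n * x ^ n) := by
      rw [show α + n - 1 = α - 1 + n by ring, rpow_add hβx, rpow_natCast, mul_pow]
    rw [degGammaPdf, if_pos hx, degGammaIntegrand, hpow, ← mul_assoc lam β x]
    field_simp
  rw [← setIntegral_eq_integral_of_forall_compl_eq_zero hzero,
    setIntegral_congr_fun measurableSet_Ioi hpoint, integral_const_mul,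
    integral_comp_mul_left_Ioi (degGammaIntegrand lam (α + n)) 0 hβ, mul_zero,
    degGammaIntegrand.integral_Ioi_eq_degGamma, smul_eq_mul]
  field_simp

theorem degGamma_second_moment (lam α β : ℝ) (hlam : lam ∈ Set.Ioo (0:ℝ) 1)
    (hα : 0 < α) (hβ : 0 < β) (h : α + 2 < 1 / lam) :
    ∫ x : ℝ, x ^ 2 * degGammaPdf lam α β x =
      α * (α + 1) / (β ^ 2 * (1 - lam * (α + 1)) * (1 - lam * (α + 2))) := by
  obtain ⟨hl, -⟩ := hlam
  have hΓ := degGamma_pos hl hα (by linarith)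
  have hd₂ : 0 < 1 - lam * (α + 2) := by linarith [(lt_div_iff₀ hl).mp h]
  have hd₁ : 0 < 1 - lam * (α + 1) := by nlinarith
  rw [integral_pow_mul_degGammaPdf lam α hβ 2, Nat.cast_two, div_eq_div_iff (by positivity) (by positivity)]
  linear_combination β ^ 2 * degGamma_add_two hl hα h
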